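/- Let f : [0, ∞) → [0, ∞) be continuous, α > 0, and suppose ∫ₓ^∞ e^{αu} f(u) du < ∞ for all x and ∫ₓ^∞ e^{αu} f(u) du ∼ K x^{−1/2} as x → ∞ for some K > 0. If additionally f(x) e^{αx} is eventually monotone, then f(x) ∼ (K/2) e^{−αx} x^{−3/2} as x → ∞. -/

import Mathlib

open Filter MeasureTheory Real Set Topology

/-! This is a monotone density argument. Write `g u = e^{αu} f u` and `T x = ∫ₓ^∞ g`. An
integrable function that is eventually nondecreasing is eventually `≤ 0`, so with `f ≥ 0` the
function `g` is eventually nonincreasing in either case. For `c > 1` this bounds the increments: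
`T x - T (c x) ≤ (c - 1) x g x` and `(1 - c⁻¹) x g x ≤ T (x / c) - T x`. Multiplying by
`x ^ β` and letting `x → ∞` squeezes `x ^ (β + 1) g x` between `K (1 - c ^ (-β)) / (c - 1)`
and `K (c ^ β - 1) / (1 - c⁻¹)`, difference quotients of `c ^ p` at `1` which both tend to
`β K` as `c → 1⁺`; here `β = 1/2`. -/

theorem tendsto_of_forall_eventually_bounds {α ι β : Type*} [TopologicalSpace β]
    [LinearOrder β] [OrderTopology β] {m : Filter α} [m.NeBot] {l : Filter ι} {h : ι → β}
    {L U : α → ι → β} {lo up : α → β} {b : β} (hlo : Tendsto lo m (𝓝 b))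
    (hup : Tendsto up m (𝓝 b))
    (hL : ∀ᶠ c in m, Tendsto (L c) l (𝓝 (lo c)) ∧ ∀ᶠ x in l, L c x ≤ h x)
    (hU : ∀ᶠ c in m, Tendsto (U c) l (𝓝 (up c)) ∧ ∀ᶠ x in l, h x ≤ U c x) :
    Tendsto h l (𝓝 b) := by
  refine tendsto_order.2 ⟨fun b' hb' => ?_, fun b' hb' => ?_⟩
  · obtain ⟨c, hc, hLc, hle⟩ := ((hlo.eventually (lt_mem_nhds hb')).and hL).exists
    filter_upwards [hLc.eventually (lt_mem_nhds hc), hle] with x h₁ h₂ using h₁.trans_le h₂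
  · obtain ⟨c, hc, hUc, hle⟩ := ((hup.eventually (gt_mem_nhds hb')).and hU).exists
    filter_upwards [hUc.eventually (gt_mem_nhds hc), hle] with x h₁ h₂ using h₂.trans_lt h₁

theorem tendsto_rpow_sub_one_div_sub_one (p : ℝ) :
    Tendsto (fun c : ℝ => (c ^ p - 1) / (c - 1)) (𝓝[≠] 1) (𝓝 p) := by
  have hd : HasDerivAt (fun c : ℝ => c ^ p) p 1 := by
    simpa using Real.hasDerivAt_rpow_const (x := 1) (p := p) (Or.inl one_ne_zero)
  refine (hasDerivAt_iff_tendsto_slope.mp hd).congr fun c => ?_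
  simp [slope_def_field]

section
variable {g : ℝ → ℝ} {a : ℝ}

theorem MonotoneOn.nonpos_of_integrableOn_Ioi (hg : MonotoneOn g (Ici a))
    (hint : IntegrableOn g (Ioi a)) {x : ℝ} (hx : a ≤ x) : g x ≤ 0 := by
  by_contra! hpos
  have hconst : IntegrableOn (fun _ => g x) (Ioi x) := by
    refine (hint.mono_set (Ioi_subset_Ioi hx)).mono' aestronglyMeasurable_const ?_
    refine ae_restrict_of_forall_mem measurableSet_Ioi fun u hu => ?_
    rw [Real.norm_of_nonneg hpos.le]
    exact hg hx (hx.trans (le_of_lt hu)) (le_of_lt hu)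
  simp [integrableOn_const_iff, hpos.ne'] at hconst

theorem AntitoneOn.integral_Ioi_sub_le (hg : AntitoneOn g (Ici a)) {s t : ℝ}
    (hint : IntegrableOn g (Ioi s)) (has : a ≤ s) (hst : s ≤ t) :
    (∫ u in Ioi s, g u) - ∫ u in Ioi t, g u ≤ (t - s) * g s := by
  have hg' : AntitoneOn g (uIcc s t) :=
    hg.mono ((uIcc_of_le hst).trans_subset (Icc_subset_Ici_self.trans (Ici_subset_Ici.2 has)))
  rw [intervalIntegral.integral_Ioi_sub_Ioi hint hst, ← smul_eq_mul,
    ← intervalIntegral.integral_const]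
  exact intervalIntegral.integral_mono_on hst hg'.intervalIntegrable intervalIntegrable_const
    fun u hu => hg (mem_Ici.2 has) (mem_Ici.2 (has.trans hu.1)) hu.1

theorem AntitoneOn.le_integral_Ioi_sub (hg : AntitoneOn g (Ici a)) {s t : ℝ}
    (hint : IntegrableOn g (Ioi s)) (has : a ≤ s) (hst : s ≤ t) :
    (t - s) * g t ≤ (∫ u in Ioi s, g u) - ∫ u in Ioi t, g u := by
  have hg' : AntitoneOn g (uIcc s t) :=
    hg.mono ((uIcc_of_le hst).trans_subset (Icc_subset_Ici_self.trans (Ici_subset_Ici.2 has)))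
  rw [intervalIntegral.integral_Ioi_sub_Ioi hint hst, ← smul_eq_mul,
    ← intervalIntegral.integral_const]
  exact intervalIntegral.integral_mono_on hst intervalIntegrable_const hg'.intervalIntegrable
    fun u hu => hg (mem_Ici.2 (has.trans hu.1)) (mem_Ici.2 (has.trans hst)) hu.2

theorem AntitoneOn.rpow_mul_integral_Ioi_sub_le (hg : AntitoneOn g (Ici a))
    (hint : ∀ x, IntegrableOn g (Ioi x)) (β : ℝ) {c x : ℝ} (hc : 1 ≤ c) (hx : 0 < x)
    (hax : a ≤ x) :
    x ^ β * (∫ u in Ioi x, g u) - c ^ (-β) * ((c * x) ^ β * ∫ u in Ioi (c * x), g u)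
      ≤ (c - 1) * (x ^ (β + 1) * g x) := by
  have hc0 : 0 < c := by linarith
  have hscale : c ^ (-β) * (c * x) ^ β = x ^ β := by
    rw [mul_rpow hc0.le hx.le, ← mul_assoc, ← rpow_add hc0, neg_add_cancel, rpow_zero, one_mul]
  have hbound := hg.integral_Ioi_sub_le (hint x) hax (le_mul_of_one_le_left hx.le hc)
  calc x ^ β * (∫ u in Ioi x, g u) - c ^ (-β) * ((c * x) ^ β * ∫ u in Ioi (c * x), g u)
      = x ^ β * ((∫ u in Ioi x, g u) - ∫ u in Ioi (c * x), g u) := by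
        rw [← mul_assoc, hscale, mul_sub]
    _ ≤ x ^ β * ((c * x - x) * g x) := by gcongr
    _ = (c - 1) * (x ^ (β + 1) * g x) := by rw [rpow_add_one hx.ne']; ring

theorem AntitoneOn.le_rpow_mul_integral_Ioi_sub (hg : AntitoneOn g (Ici a))
    (hint : ∀ x, IntegrableOn g (Ioi x)) (β : ℝ) {c x : ℝ} (hc : 1 ≤ c) (hx : 0 < x)
    (hax : a ≤ x / c) :
    (1 - c⁻¹) * (x ^ (β + 1) * g x)
      ≤ c ^ β * ((x / c) ^ β * ∫ u in Ioi (x / c), g u) - x ^ β * ∫ u in Ioi x, g u := by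
  have hc0 : 0 < c := by linarith
  have hscale : c ^ β * (x / c) ^ β = x ^ β := by
    rw [← mul_rpow hc0.le (by positivity), mul_div_cancel₀ x hc0.ne']
  have hbound := hg.le_integral_Ioi_sub (hint (x / c)) hax (div_le_self hx.le hc)
  calc (1 - c⁻¹) * (x ^ (β + 1) * g x) = x ^ β * ((x - x / c) * g x) := by
        rw [rpow_add_one hx.ne']; ring
    _ ≤ x ^ β * ((∫ u in Ioi (x / c), g u) - ∫ u in Ioi x, g u) := by gcongr
    _ = c ^ β * ((x / c) ^ β * ∫ u in Ioi (x / c), g u) - x ^ β * ∫ u in Ioi x, g u := by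
        rw [← mul_assoc, hscale, mul_sub]

theorem AntitoneOn.tendsto_rpow_mul_of_tendsto_rpow_mul_integral_Ioi
    (hg : AntitoneOn g (Ici a)) (hint : ∀ x, IntegrableOn g (Ioi x)) {β K : ℝ}
    (hT : Tendsto (fun x => x ^ β * ∫ u in Ioi x, g u) atTop (𝓝 K)) :
    Tendsto (fun x => x ^ (β + 1) * g x) atTop (𝓝 (β * K)) := by
  set ρ : ℝ → ℝ := fun x => x ^ β * ∫ u in Ioi x, g u
  have hslope (p : ℝ) : Tendsto (fun c : ℝ => (c ^ p - 1) / (c - 1)) (𝓝[>] 1) (𝓝 p) :=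
    (tendsto_rpow_sub_one_div_sub_one p).mono_left (nhdsGT_le_nhdsNE 1)
  have hlo :
      Tendsto (fun c : ℝ => (K - c ^ (-β) * K) / (c - 1)) (𝓝[>] 1) (𝓝 (β * K)) := by
    have h := (hslope (-β)).const_mul (-K)
    rw [neg_mul_neg, mul_comm] at h
    refine h.congr fun c => ?_
    generalize c ^ (-β) = y
    ring
  have hup :
      Tendsto (fun c : ℝ => (c ^ β * K - K) / (1 - c⁻¹)) (𝓝[>] 1) (𝓝 (β * K)) := by
    have hc : Tendsto (fun c : ℝ => K * c) (𝓝[>] 1) (𝓝 (K * 1)) :=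
      (tendsto_nhdsWithin_of_tendsto_nhds tendsto_id).const_mul K
    refine ((hc.mul (hslope β)).congr' ?_).trans_eq (by rw [mul_one, mul_comm])
    filter_upwards [self_mem_nhdsWithin] with c (hc1 : 1 < c)
    have : c - 1 ≠ 0 := by linarith
    field_simp
  refine tendsto_of_forall_eventually_bounds hlo hup
    (L := fun c x => (ρ x - c ^ (-β) * ρ (c * x)) / (c - 1))
    (U := fun c x => (c ^ β * ρ (x / c) - ρ x) / (1 - c⁻¹)) ?_ ?_
  all_goals filter_upwards [self_mem_nhdsWithin] with c (hc : 1 < c)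
  · have hTc := hT.comp (tendsto_id.const_mul_atTop (zero_lt_one.trans hc))
    refine ⟨(hT.sub (hTc.const_mul _)).div_const _, ?_⟩
    filter_upwards [eventually_ge_atTop a, eventually_gt_atTop 0] with x hax hx
    rw [div_le_iff₀ (by linarith), mul_comm _ (c - 1)]
    exact hg.rpow_mul_integral_Ioi_sub_le hint β hc.le hx hax
  · have hTc := hT.comp (tendsto_id.atTop_div_const (zero_lt_one.trans hc))
    refine ⟨((hTc.const_mul _).sub hT).div_const _, ?_⟩
    filter_upwards [eventually_ge_atTop (a * c), eventually_gt_atTop 0] with x hax hx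
    rw [le_div_iff₀ (by simp [inv_lt_one_of_one_lt₀ hc]), mul_comm _ (1 - c⁻¹)]
    exact hg.le_rpow_mul_integral_Ioi_sub hint β hc.le hx ((le_div_iff₀ (by linarith)).2 hax)

end

theorem stmt_15_general (f : ℝ → ℝ) (K α : ℝ) (hK : 0 < K)
    (hf0 : ∀ x : ℝ, 0 ≤ x → 0 ≤ f x)
    (hint : ∀ x : ℝ, IntegrableOn (fun u => Real.exp (α * u) * f u) (Ioi x))
    (hasym : Tendsto (fun x => (∫ u in Ioi x, Real.exp (α * u) * f u) /
        (K * x ^ (-(1 : ℝ) / 2))) atTop (nhds 1))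
    (hmono : ∃ x0 : ℝ, MonotoneOn (fun x => f x * Real.exp (α * x)) (Ici x0) ∨
        AntitoneOn (fun x => f x * Real.exp (α * x)) (Ici x0)) :
    Tendsto (fun x => f x / (K / 2 * Real.exp (-α * x) * x ^ (-(3 : ℝ) / 2)))
      atTop (nhds 1) := by
  set g : ℝ → ℝ := fun u => Real.exp (α * u) * f u
  obtain ⟨x₀, hmono⟩ := hmono
  simp only [mul_comm (f _)] at hmono
  have hanti : AntitoneOn g (Ici (max x₀ 0)) := by
    rcases hmono with hmono | hanti
    · have hzero : EqOn g 0 (Ici (max x₀ 0)) := fun x hx =>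
        le_antisymm (hmono.nonpos_of_integrableOn_Ioi (hint x₀) (le_of_max_le_left hx))
          (mul_nonneg (exp_pos _).le (hf0 x (le_of_max_le_right hx)))
      exact fun x hx y hy _ => (hzero hy).trans_le (hzero hx).symm.le
    · exact hanti.mono (Ici_subset_Ici.2 (le_max_left _ _))
  have hT : Tendsto (fun x => x ^ (1 / 2 : ℝ) * ∫ u in Ioi x, g u) atTop (𝓝 K) := by
    refine ((hasym.const_mul K).congr' ?_).trans_eq (by rw [mul_one])
    filter_upwards [eventually_gt_atTop 0] with x hx
    rw [neg_div, rpow_neg hx.le]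
    field_simp
  have hdensity := hanti.tendsto_rpow_mul_of_tendsto_rpow_mul_integral_Ioi hint hT
  refine ((hdensity.div_const (K / 2)).congr' ?_).trans_eq (by field_simp)
  filter_upwards [eventually_gt_atTop 0] with x hx
  simp only [g]
  rw [neg_div, rpow_neg hx.le, neg_mul, exp_neg, show (1 / 2 + 1 : ℝ) = 3 / 2 by norm_num]
  field_simp

/-- From `∫ₓ^∞ e^{αu} f(u) du ∼ K x^{−1/2}` and eventual monotonicity of
`x ↦ f(x) e^{αx}`, one deduces `f(x) ∼ (K/2) e^{−αx} x^{−3/2}`. -/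
theorem stmt_15 (f : ℝ → ℝ) (K α : ℝ) (hK : 0 < K) (hα : 0 < α)
    (hfc : Continuous f) (hf0 : ∀ x : ℝ, 0 ≤ x → 0 ≤ f x)
    (hint : ∀ x : ℝ, IntegrableOn (fun u => Real.exp (α * u) * f u) (Ioi x))
    (hasym : Tendsto (fun x => (∫ u in Ioi x, Real.exp (α * u) * f u) /
        (K * x ^ (-(1 : ℝ) / 2))) atTop (nhds 1))
    (hmono : ∃ x0 : ℝ, MonotoneOn (fun x => f x * Real.exp (α * x)) (Ici x0) ∨
        AntitoneOn (fun x => f x * Real.exp (α * x)) (Ici x0)) :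
    Tendsto (fun x => f x / (K / 2 * Real.exp (-α * x) * x ^ (-(3 : ℝ) / 2)))
      atTop (nhds 1) :=
  stmt_15_general f K α hK hf0 hint hasym hmono
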